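/- Let q ≥ 2 be an integer and let β_1, …, β_q ∈ (0,1) satisfy Σ_{k=1}^q β_k ≤ 1. Then (q − 1) · ∏_{k=1}^q √(β_k/(1 − β_k)) ≤ (q − 1)^{1 − q/2}, and consequently (q − 1) · ∏_{k=1}^q √(β_k/(1 − β_k)) ≤ 1. -/

import Mathlib

/-! Since `∑ β ≤ 1`, AM-GM gives `1 - β k ≥ ∑_{j ≠ k} β j ≥ (q - 1) (∏_{j ≠ k} β j)^(1/(q-1))`.
Multiplying over `k`, every `β j` occurs `q - 1` times, so `∏ (1 - β k) ≥ (q - 1)^q ∏ β k`;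
that is, `∏ β k / (1 - β k) ≤ (q - 1)^(-q)`, and taking square roots gives the bound. -/

open Finset

namespace Real

theorem card_pow_mul_prod_le_sum_pow {ι : Type*} (s : Finset ι) {f : ι → ℝ}
    (hf : ∀ i ∈ s, 0 ≤ f i) : (#s : ℝ) ^ #s * ∏ i ∈ s, f i ≤ (∑ i ∈ s, f i) ^ #s := by
  rcases s.eq_empty_or_nonempty with rfl | hs
  · simp
  have hcard : (0 : ℝ) < #s := by exact_mod_cast hs.card_pos
  have amgm := geom_mean_le_arith_mean s (fun _ ↦ 1) f (fun _ _ ↦ zero_le_one)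
    (by simpa using hcard) hf
  simp only [rpow_one, sum_const, nsmul_eq_mul, mul_one, one_mul] at amgm
  have hprod : 0 ≤ ∏ i ∈ s, f i := prod_nonneg hf
  calc (#s : ℝ) ^ #s * ∏ i ∈ s, f i
      = (#s : ℝ) ^ #s * ((∏ i ∈ s, f i) ^ ((#s : ℝ)⁻¹)) ^ #s := by
        rw [rpow_inv_natCast_pow hprod hs.card_pos.ne']
    _ ≤ (#s : ℝ) ^ #s * ((∑ i ∈ s, f i) / #s) ^ #s := by gcongr
    _ = (∑ i ∈ s, f i) ^ #s := by
        rw [div_pow, mul_div_cancel₀ _ (pow_ne_zero _ hcard.ne')]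

end Real

namespace Finset

theorem prod_prod_erase_eq_pow {ι M : Type*} [CommMonoid M] [DecidableEq ι] (s : Finset ι)
    (f : ι → M) : ∏ k ∈ s, ∏ j ∈ s.erase k, f j = (∏ j ∈ s, f j) ^ (#s - 1) := by
  rw [prod_comm' (t' := s) (s' := fun j ↦ s.erase j) (fun k j ↦ by aesop), ← prod_pow]
  refine prod_congr rfl fun j hj ↦ ?_
  rw [prod_const, card_erase_of_mem hj]

end Finset

open Fintype in
theorem card_sub_one_pow_card_mul_prod_le_prod_one_sub {ι : Type*} [Fintype ι] [Nontrivial ι]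
    {β : ι → ℝ} (hβ : ∀ i, 0 ≤ β i) (hsum : ∑ i, β i ≤ 1) :
    ((card ι : ℝ) - 1) ^ card ι * ∏ i, β i ≤ ∏ i, (1 - β i) := by
  classical
  set m := card ι - 1 with hm
  have hm_pos : m ≠ 0 := by have := Fintype.one_lt_card (α := ι); omega
  have hcast : ((card ι : ℝ) - 1) = m := by rw [hm, Nat.cast_pred card_pos]
  have hcard_erase : ∀ k : ι, #(univ.erase k) = m := fun k ↦ by
    rw [card_erase_of_mem (mem_univ k), card_univ]
  have local_bound : ∀ k, (m : ℝ) ^ m * ∏ j ∈ univ.erase k, β j ≤ (1 - β k) ^ m := fun k ↦ by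
    have hrest : ∑ j ∈ univ.erase k, β j ≤ 1 - β k := by
      linarith [add_sum_erase univ β (mem_univ k)]
    calc (m : ℝ) ^ m * ∏ j ∈ univ.erase k, β j ≤ (∑ j ∈ univ.erase k, β j) ^ m := by
          simpa [hcard_erase k] using
            Real.card_pow_mul_prod_le_sum_pow (univ.erase k) (fun j _ ↦ hβ j)
      _ ≤ (1 - β k) ^ m := by gcongr; exact sum_nonneg fun j _ ↦ hβ j
  have hprod : 0 ≤ ∏ i, β i := prod_nonneg fun i _ ↦ hβ i
  have hprod_pow : ((m : ℝ) ^ card ι * ∏ i, β i) ^ m ≤ (∏ i, (1 - β i)) ^ m := by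
    calc ((m : ℝ) ^ card ι * ∏ i, β i) ^ m
        = ∏ k, ((m : ℝ) ^ m * ∏ j ∈ univ.erase k, β j) := by
          rw [prod_mul_distrib, prod_const, prod_prod_erase_eq_pow, card_univ, ← hm, mul_pow,
            ← pow_mul, ← pow_mul, mul_comm (card ι), mul_comm]
      _ ≤ ∏ k, (1 - β k) ^ m :=
          prod_le_prod (fun k _ ↦ mul_nonneg (by positivity) (prod_nonneg fun j _ ↦ hβ j))
            fun k _ ↦ local_bound k
      _ = (∏ i, (1 - β i)) ^ m := prod_pow _ _ _
  have hone_sub : ∀ i, 0 ≤ 1 - β i := fun i ↦ by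
    linarith [single_le_sum (fun j _ ↦ hβ j) (mem_univ i)]
  rw [hcast]
  exact (pow_le_pow_iff_left₀ (by positivity) (prod_nonneg fun i _ ↦ hone_sub i) hm_pos).1
    hprod_pow

theorem mul_sqrt_le_rpow_of_pow_mul_le_one {c P : ℝ} (hc : 0 < c) (n : ℕ)
    (h : c ^ n * P ≤ 1) : c * √P ≤ c ^ (1 - (n : ℝ) / 2) := by
  have hhalf : c ^ ((n : ℝ) / 2) = √(c ^ n) := by
    rw [Real.sqrt_eq_rpow, ← Real.rpow_natCast, ← Real.rpow_mul hc.le, mul_one_div]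
  rw [Real.rpow_sub hc, Real.rpow_one, hhalf, div_eq_mul_inv]
  gcongr
  rw [← Real.sqrt_inv, inv_eq_one_div]
  exact Real.sqrt_le_sqrt ((le_div_iff₀ (by positivity)).2 (by rwa [mul_comm]))

/-- For an integer `q ≥ 2` and reals `β_1, …, β_q ∈ (0,1)` with `Σ β_k ≤ 1`,
`(q - 1) · ∏_k √(β_k/(1 - β_k)) ≤ (q - 1)^(1 - q/2) ≤ 1`,
where the exponent is the real power of the positive base `q - 1`. -/
theorem loop_vertex_factor_bound (q : ℕ) (hq : 2 ≤ q) (β : Fin q → ℝ)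
    (hβ : ∀ k, β k ∈ Set.Ioo (0 : ℝ) 1) (hsum : ∑ k, β k ≤ 1) :
    ((q : ℝ) - 1) * ∏ k, Real.sqrt (β k / (1 - β k)) ≤
        ((q : ℝ) - 1) ^ ((1 : ℝ) - (q : ℝ) / 2) ∧
      ((q : ℝ) - 1) * ∏ k, Real.sqrt (β k / (1 - β k)) ≤ 1 := by
  have : Nontrivial (Fin q) := Fin.nontrivial_iff_two_le.2 hq
  have hc : (1 : ℝ) ≤ q - 1 := by
    have : (2 : ℝ) ≤ q := by exact_mod_cast hq
    linarith
  have hone_sub : ∀ k, 0 < 1 - β k := fun k ↦ sub_pos.2 (hβ k).2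
  have hratio : ((q : ℝ) - 1) ^ q * ∏ k, β k / (1 - β k) ≤ 1 := by
    have := card_sub_one_pow_card_mul_prod_le_prod_one_sub (fun k ↦ (hβ k).1.le) hsum
    rw [Fintype.card_fin] at this
    rw [prod_div_distrib, ← mul_div_assoc, div_le_one (prod_pos fun k _ ↦ hone_sub k)]
    exact this
  have hbound : ((q : ℝ) - 1) * ∏ k, √(β k / (1 - β k)) ≤ ((q : ℝ) - 1) ^ (1 - (q : ℝ) / 2) := by
    rw [← Real.sqrt_prod _ fun k _ ↦ div_nonneg (hβ k).1.le (hone_sub k).le]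
    exact mul_sqrt_le_rpow_of_pow_mul_le_one (by linarith) q hratio
  exact ⟨hbound, hbound.trans (Real.rpow_le_one_of_one_le_of_nonpos hc (by linarith))⟩
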